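/- arXiv:1809.09330 — 2 statements merged into one kernel-verified Lean document; each statement's English description precedes it below -/
import Mathlib

section
/- For a k-dimensional grid of cells, if a set S of cells has projections onto the k coordinate hyperplanes (each projection obtained by deleting one coordinate), then the size of S is at most the product of the k projection sizes raised to the power 1/(k-1); equivalently |S|^{k-1} ≤ ∏_{i=1}^{k} |π_i(S)|, where π_i deletes the i-th coordinate. -/
/-!
Write `S ⊆ α^(n+1)` as the disjoint union of its slices `S_a` (first coordinate `a`), sets in
`α^n`. By induction `|S_a|^(n-1) ≤ ∏_j |π_j S_a|`, and `|S_a| ≤ |π_0 S|`, so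
`|S_a|^n ≤ |π_0 S| ∏_j |π_j S_a|`. Hölder's inequality with `n` exponents `1/n` turns this into
`|S|^n = (∑_a |S_a|)^n ≤ |π_0 S| ∏_j ∑_a |π_j S_a|`, and since the slices of `π_(j+1) S` are the
`π_j S_a`, `∑_a |π_j S_a| ≤ |π_(j+1) S|`.
-/

open Finset NNReal

theorem NNReal.sum_prod_rpow_le_prod_sum_rpow {ι κ : Type*} (s : Finset ι) (t : Finset κ)
    (w : κ → ℝ≥0) (hw : ∑ j ∈ t, w j = 1) (a : κ → ι → ℝ≥0) :
    ∑ i ∈ s, ∏ j ∈ t, a j i ^ (w j : ℝ) ≤ ∏ j ∈ t, (∑ i ∈ s, a j i) ^ (w j : ℝ) := by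
  set A : κ → ℝ≥0 := fun j => ∑ i ∈ s, a j i
  have ha : ∀ j, ∀ i ∈ s, a j i = a j i / A j * A j := fun j i hi =>
    (div_mul_cancel_of_imp fun h => nonpos_iff_eq_zero.mp (h ▸ single_le_sum (by simp) hi)).symm
  have amgm : ∑ i ∈ s, ∏ j ∈ t, (a j i / A j) ^ (w j : ℝ) ≤ 1 := calc
    _ ≤ ∑ i ∈ s, ∑ j ∈ t, w j * (a j i / A j) :=
      sum_le_sum fun i _ => geom_mean_le_arith_mean_weighted t w _ hw
    _ = ∑ j ∈ t, w j * (A j / A j) := by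
      rw [sum_comm]; simp only [← mul_sum, ← sum_div, A]
    _ ≤ ∑ j ∈ t, w j * 1 := by gcongr; exact div_self_le_one _
    _ = 1 := by simp [hw]
  calc ∑ i ∈ s, ∏ j ∈ t, a j i ^ (w j : ℝ)
      = (∑ i ∈ s, ∏ j ∈ t, (a j i / A j) ^ (w j : ℝ)) * ∏ j ∈ t, A j ^ (w j : ℝ) := by
        rw [sum_mul]
        refine sum_congr rfl fun i hi => ?_
        rw [← prod_mul_distrib]
        exact prod_congr rfl fun j _ => by rw [← mul_rpow, ← ha j i hi]
    _ ≤ ∏ j ∈ t, A j ^ (w j : ℝ) := mul_le_of_le_one_left zero_le amgm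

theorem NNReal.sum_pow_le_mul_prod_sum {ι : Type*} (s : Finset ι) {n : ℕ} (hn : n ≠ 0)
    (c : ℝ≥0) (x : ι → ℝ≥0) (a : Fin n → ι → ℝ≥0) (h : ∀ i ∈ s, x i ^ n ≤ c * ∏ j, a j i) :
    (∑ i ∈ s, x i) ^ n ≤ c * ∏ j, ∑ i ∈ s, a j i := by
  set r : ℝ := (n : ℝ)⁻¹
  have hw : ∑ _j : Fin n, (n : ℝ≥0)⁻¹ = 1 := by simp [hn]
  have hroot : ∑ i ∈ s, x i ≤ (c * ∏ j, ∑ i ∈ s, a j i) ^ r := calc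
    ∑ i ∈ s, x i ≤ ∑ i ∈ s, c ^ r * ∏ j, a j i ^ r := sum_le_sum fun i hi => by
        rw [← pow_rpow_inv_natCast (x i) hn, finsetProd_rpow, ← mul_rpow]
        gcongr
        exact h i hi
    _ ≤ c ^ r * ∏ j, (∑ i ∈ s, a j i) ^ r := by
        rw [← mul_sum]
        gcongr
        simpa using sum_prod_rpow_le_prod_sum_rpow s univ _ hw a
    _ = (c * ∏ j, ∑ i ∈ s, a j i) ^ r := by rw [finsetProd_rpow, mul_rpow]
  calc (∑ i ∈ s, x i) ^ n ≤ ((c * ∏ j, ∑ i ∈ s, a j i) ^ r) ^ n := by gcongr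
    _ = c * ∏ j, ∑ i ∈ s, a j i := rpow_inv_natCast_pow _ hn

theorem Nat.sum_pow_le_mul_prod_sum {ι : Type*} (s : Finset ι) {n : ℕ} (hn : n ≠ 0)
    (c : ℕ) (x : ι → ℕ) (a : Fin n → ι → ℕ) (h : ∀ i ∈ s, x i ^ n ≤ c * ∏ j, a j i) :
    (∑ i ∈ s, x i) ^ n ≤ c * ∏ j, ∑ i ∈ s, a j i := by
  have := NNReal.sum_pow_le_mul_prod_sum s hn c (fun i => x i) (fun j i => a j i)
    fun i hi => by exact_mod_cast h i hi
  exact_mod_cast this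

namespace LoomisWhitney

variable {α : Type*} [DecidableEq α] {n : ℕ}

def proj (i : Fin (n + 1)) (S : Finset (Fin (n + 1) → α)) : Finset (Fin n → α) :=
  S.image (· ∘ i.succAbove)

def slice (S : Finset (Fin (n + 1) → α)) (a : α) : Finset (Fin n → α) :=
  {f ∈ S | f 0 = a}.image Fin.tail

theorem card_eq_sum_card_slice (S : Finset (Fin (n + 1) → α)) :
    #S = ∑ a ∈ S.image (fun f => f 0), #(slice S a) := by
  rw [card_eq_sum_card_fiberwise fun f hf => mem_image_of_mem (fun f => f 0) hf]
  refine sum_congr rfl fun a _ => (card_image_of_injOn fun f hf g hg hfg => ?_).symm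
  simp only [coe_filter, Set.mem_ofPred_eq] at hf hg
  rw [← Fin.cons_self_tail f, ← Fin.cons_self_tail g, hf.2, hg.2, hfg]

theorem slice_nonempty {S : Finset (Fin (n + 1) → α)} {a : α} (ha : a ∈ S.image (fun f => f 0)) :
    (slice S a).Nonempty := by
  obtain ⟨f, hf, rfl⟩ := mem_image.mp ha
  exact ⟨Fin.tail f, mem_image_of_mem Fin.tail (mem_filter.mpr ⟨hf, rfl⟩)⟩

theorem slice_subset_proj_zero (S : Finset (Fin (n + 1) → α)) (a : α) :
    slice S a ⊆ proj 0 S := by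
  rw [slice, proj, Fin.succAbove_zero]
  exact image_subset_image (filter_subset _ _)

theorem proj_slice (S : Finset (Fin (n + 2) → α)) (j : Fin (n + 1)) (a : α) :
    proj j (slice S a) = {g ∈ proj j.succ S | g 0 = a}.image Fin.tail := by
  simp only [proj, slice, filter_image, image_image]
  congr 1
  ext f
  simp [Fin.tail, Function.comp_def, Fin.succ_succAbove_succ]

theorem sum_card_proj_slice_le (S : Finset (Fin (n + 2) → α)) (j : Fin (n + 1)) (T : Finset α) :
    ∑ a ∈ T, #(proj j (slice S a)) ≤ #(proj j.succ S) := calc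
  _ ≤ ∑ a ∈ T, #{g ∈ proj j.succ S | g 0 = a} :=
    sum_le_sum fun a _ => proj_slice S j a ▸ card_image_le
  _ = #{g ∈ proj j.succ S | g 0 ∈ T} := sum_card_fiberwise_eq_card_filter _ _ _
  _ ≤ #(proj j.succ S) := card_filter_le _ _

theorem card_pow_le_prod_card_proj :
    ∀ {n : ℕ} {S : Finset (Fin (n + 1) → α)}, S.Nonempty → #S ^ n ≤ ∏ i, #(proj i S)
  | 0, S, hS => by simpa [proj, Nat.one_le_iff_ne_zero] using hS.ne_empty
  | n + 1, S, hS => calc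
    #S ^ (n + 1) = (∑ a ∈ S.image (fun f => f 0), #(slice S a)) ^ (n + 1) := by
      rw [← card_eq_sum_card_slice]
    _ ≤ #(proj 0 S) * ∏ j : Fin (n + 1), ∑ a ∈ S.image (fun f => f 0), #(proj j (slice S a)) :=
      Nat.sum_pow_le_mul_prod_sum _ n.succ_ne_zero _ _ _ fun a ha => by
        rw [pow_succ']
        exact Nat.mul_le_mul (card_le_card (slice_subset_proj_zero S a))
          (card_pow_le_prod_card_proj (slice_nonempty ha))
    _ ≤ #(proj 0 S) * ∏ j : Fin (n + 1), #(proj j.succ S) := by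
      gcongr with j
      exact sum_card_proj_slice_le S j _
    _ = ∏ i, #(proj i S) := (Fin.prod_univ_succ fun i => #(proj i S)).symm

end LoomisWhitney

/-- Discrete Loomis–Whitney inequality: for a finite set `S` of cells in a
`(k+1)`-dimensional grid (so dimension ≥ 2 when `1 ≤ k`), `|S|^k` is at most the
product over the `k+1` coordinate directions of the sizes of the projections of
`S` obtained by deleting that coordinate. -/
theorem stmt_0 (k : ℕ) (hk : 1 ≤ k) (S : Finset (Fin (k + 1) → ℕ)) :
    S.card ^ k ≤ ∏ i : Fin (k + 1), (S.image (fun f => f ∘ i.succAbove)).card := by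
  obtain rfl | hS := S.eq_empty_or_nonempty
  · rw [card_empty, zero_pow (by omega)]
    exact Nat.zero_le _
  · exact LoomisWhitney.card_pow_le_prod_card_proj hS
end

section
/- Suppose R : ℕ → ℝ satisfies R(n) = 7 R(n/2) + c·n²/B for powers of 2 n greater than a base s, with R(s) = M/B, where s = √(rM). Then for n = s·2^t, R(n) = O(7^t · M/B + c·(n²/B)·∑_{i=0}^{t-1} (7/4)^i) = O((n/√(rM))^{log₂ 7} · M/B), i.e., R(n) = O(n^{log₂ 7} · r^{(2−log₂ 7)/2} · M^{1−(log₂ 7)/2} / B). -/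
open Real

/-!
Unrolling `R(s·2^(t+1)) = 7·R(s·2^t) + (c·r·M/B)·4^(t+1)` gives the closed form
`R(s·2^t) = (M/B)·((1 + 4cr/3)·7^t − (4cr/3)·4^t)`; since `7 > 4` the geometric term in `4`
is dominated by the leaves, so `R(s·2^t) ≤ (1 + 4cr/3)·7^t·M/B`. Finally
`7^t·r·M = (s·2^t)^(log₂ 7)·r^((2 − log₂ 7)/2)·M^(1 − (log₂ 7)/2)` because `(2^t)^(log₂ 7) = 7^t`
and `s^2 = r·M`.
-/

theorem inhomogeneous_rec_eq {a b K : ℝ} (hab : a ≠ b) {x : ℕ → ℝ}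
    (hx : ∀ t, x (t + 1) = a * x t + K * b ^ (t + 1)) (t : ℕ) :
    x t = (x 0 + K * b / (a - b)) * a ^ t - K * b / (a - b) * b ^ t := by
  have hab' : a - b ≠ 0 := sub_ne_zero.mpr hab
  induction t with
  | zero => simp
  | succ t ih =>
    rw [hx, ih]
    field_simp
    ring

theorem inhomogeneous_rec_le {a b K : ℝ} (hba : b < a) (hb : 0 ≤ b) (hK : 0 ≤ K) {x : ℕ → ℝ}
    (hx : ∀ t, x (t + 1) = a * x t + K * b ^ (t + 1)) (t : ℕ) :
    x t ≤ (x 0 + K * b / (a - b)) * a ^ t := by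
  rw [inhomogeneous_rec_eq hba.ne' hx t, sub_le_self_iff]
  have : 0 < a - b := sub_pos.mpr hba
  positivity

theorem two_pow_rpow_logb (t : ℕ) {a : ℝ} (ha : 0 < a) :
    ((2 : ℝ) ^ t) ^ logb 2 a = a ^ t := by
  rw [← rpow_natCast, ← rpow_mul zero_le_two, mul_comm, rpow_mul zero_le_two,
    rpow_logb zero_lt_two (by norm_num) ha, rpow_natCast]

theorem sqrt_mul_rpow_mul_rpow {r M : ℝ} (hr : 0 < r) (hM : 0 < M) (L : ℝ) :
    √(r * M) ^ L * r ^ ((2 - L) / 2) * M ^ (1 - L / 2) = r * M := by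
  rw [sqrt_eq_rpow, ← rpow_mul (mul_pos hr hM).le, mul_rpow hr.le hM.le]
  calc r ^ (1 / 2 * L) * M ^ (1 / 2 * L) * r ^ ((2 - L) / 2) * M ^ (1 - L / 2)
      = r ^ (1 / 2 * L + (2 - L) / 2) * M ^ (1 / 2 * L + (1 - L / 2)) := by
        rw [rpow_add hr, rpow_add hM]; ring
    _ = r * M := by ring_nf; rw [rpow_one, rpow_one]

theorem stmt_14_general (c B M r : ℝ) (hc : 0 < c) (hB : 0 < B) (hM : 0 < M) (hr : 0 < r)
    (R : ℝ → ℝ)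
    (hbase : R (Real.sqrt (r * M)) = M / B)
    (hrec : ∀ t : ℕ,
      R (Real.sqrt (r * M) * 2 ^ (t + 1)) =
        7 * R (Real.sqrt (r * M) * 2 ^ t) +
          c * (Real.sqrt (r * M) * 2 ^ (t + 1)) ^ 2 / B) :
    ∃ C : ℝ, 0 < C ∧
      ∀ t : ℕ,
        R (Real.sqrt (r * M) * 2 ^ t) ≤
          C * (Real.sqrt (r * M) * 2 ^ t) ^ (Real.logb 2 7) *
            r ^ ((2 - Real.logb 2 7) / 2) * M ^ (1 - Real.logb 2 7 / 2) / B := by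
  set s := √(r * M)
  have hs : s ^ 2 = r * M := sq_sqrt (mul_pos hr hM).le
  have hrec_geom : ∀ t : ℕ,
      R (s * 2 ^ (t + 1)) = 7 * R (s * 2 ^ t) + c * r * M / B * 4 ^ (t + 1) := by
    intro t
    rw [hrec, mul_pow, hs, ← pow_mul, pow_mul', show (2 : ℝ) ^ 2 = 4 by norm_num]
    ring
  refine ⟨(1 + 4 * c * r / 3) / r, by positivity, fun t => ?_⟩
  calc R (s * 2 ^ t)
      ≤ (M / B + c * r * M / B * 4 / (7 - 4)) * 7 ^ t := by
        simpa [hbase] using inhomogeneous_rec_le (x := fun t => R (s * 2 ^ t))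
          (by norm_num : (4 : ℝ) < 7) (by norm_num) (by positivity) hrec_geom t
    _ = (1 + 4 * c * r / 3) / r * (7 ^ t * (r * M)) / B := by field_simp; ring
    _ = _ := by
      rw [← sqrt_mul_rpow_mul_rpow hr hM (logb 2 7), mul_rpow (sqrt_nonneg _) (by positivity),
        two_pow_rpow_logb t (by norm_num)]
      ring

/-- Read-cost recurrence of the write-efficient Strassen variant: if
`R(n) = 7·R(n/2) + c·n²/B` above the base `s = √(r·M)` with `R(s) = M/B`, then for
`n = s·2^t`, `R(n) = O(n^(log₂ 7)·r^((2 − log₂ 7)/2)·M^(1 − (log₂ 7)/2)/B)`. -/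
theorem stmt_14 (c B M r : ℝ) (hc : 0 < c) (hB : 0 < B) (hM : 0 < M) (hr : 0 < r)
    (hrM : 1 ≤ r * M) (R : ℝ → ℝ)
    (hbase : R (Real.sqrt (r * M)) = M / B)
    (hrec : ∀ t : ℕ,
      R (Real.sqrt (r * M) * 2 ^ (t + 1)) =
        7 * R (Real.sqrt (r * M) * 2 ^ t) +
          c * (Real.sqrt (r * M) * 2 ^ (t + 1)) ^ 2 / B) :
    ∃ C : ℝ, 0 < C ∧
      ∀ t : ℕ,
        R (Real.sqrt (r * M) * 2 ^ t) ≤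
          C * (Real.sqrt (r * M) * 2 ^ t) ^ (Real.logb 2 7) *
            r ^ ((2 - Real.logb 2 7) / 2) * M ^ (1 - Real.logb 2 7 / 2) / B :=
  stmt_14_general c B M r hc hB hM hr R hbase hrec
end
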